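/- arXiv:2009.14644 — 12 statements merged into one kernel-verified Lean document; each statement's English description precedes it below -/
import Mathlib

section
/- Let (a_n)_{n≥1} and (b_n)_{n≥1} be sequences of positive integers with a_n ≥ b_n for all n ≥ 1. Suppose (α_n)_{n≥0} is a sequence of positive real numbers satisfying α_n = b_{n+1}/(a_{n+1} + α_{n+1}) for all n ≥ 0 (so that α_0 is the value of the continued fraction b_1/(a_1 + b_2/(a_2 + ⋯)) and α_n is its n-th tail). Then α_0 is irrational. -/
/-- Irrationality Lemma: if `a_n ≥ b_n ≥ 1` for all `n ≥ 1` and the positive reals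
`α_n` satisfy `α_n = b_{n+1}/(a_{n+1} + α_{n+1})`, then `α_0` is irrational. -/
theorem stmt_0 (a b : ℕ → ℕ) (α : ℕ → ℝ)
    (ha : ∀ n : ℕ, 0 < a (n + 1)) (hb : ∀ n : ℕ, 0 < b (n + 1))
    (hab : ∀ n : ℕ, b (n + 1) ≤ a (n + 1))
    (hαpos : ∀ n : ℕ, 0 < α n)
    (hrec : ∀ n : ℕ, α n = (b (n + 1) : ℝ) / ((a (n + 1) : ℝ) + α (n + 1))) :
    Irrational (α 0) := by
  have hlt1 : ∀ n, α n < 1 := by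
    intro n
    rw [hrec n]
    have ha' : (0:ℝ) < a (n+1) := by exact_mod_cast ha n
    have hb' : (1:ℝ) ≤ b (n+1) := by exact_mod_cast hb n
    have hab' : (b (n+1) : ℝ) ≤ a (n+1) := by exact_mod_cast hab n
    have hd : (0:ℝ) < (a (n+1) : ℝ) + α (n+1) := by linarith [hαpos (n+1)]
    rw [div_lt_one hd]
    linarith [hαpos (n+1)]
  have key : ∀ q : ℕ, ∀ n : ℕ, ∀ p : ℤ, α n = (p : ℝ) / (q : ℝ) → False := by
    intro q
    induction q using Nat.strong_induction_on with
    | _ q ih =>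
      intro n p hpq
      rcases Nat.eq_zero_or_pos q with h0 | hq
      · subst h0
        simp at hpq
        exact absurd hpq (ne_of_gt (hαpos n))
      have hq' : (0:ℝ) < q := by exact_mod_cast hq
      have hp : (0:ℝ) < p := by
        by_contra h
        push_neg at h
        have : (p:ℝ)/q ≤ 0 := div_nonpos_of_nonpos_of_nonneg h hq'.le
        linarith [hαpos n, hpq ▸ hαpos n]
      have hpz : 0 < p := by exact_mod_cast hp
      have hplt : p < q := by
        have := hlt1 n
        rw [hpq, div_lt_one hq'] at this
        exact_mod_cast this
      -- solve for α (n+1)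
      have ha' : (0:ℝ) < a (n+1) := by exact_mod_cast ha n
      have hd : (0:ℝ) < (a (n+1) : ℝ) + α (n+1) := by linarith [hαpos (n+1)]
      have hαn : α n ≠ 0 := ne_of_gt (hαpos n)
      have heq : α (n+1) = ((b (n+1) : ℤ) * q - (a (n+1) : ℤ) * p : ℤ) / (p : ℝ) := by
        have h1 : α n * ((a (n+1) : ℝ) + α (n+1)) = b (n+1) := by
          rw [hrec n]; field_simp
        rw [hpq] at h1
        push_cast
        field_simp at h1 ⊢
        nlinarith [h1]
      have hptoNat : ((p.toNat : ℤ) : ℝ) = (p : ℝ) := by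
        rw [Int.toNat_of_nonneg hpz.le]
      have : α (n+1) = (((b (n+1) : ℤ) * q - (a (n+1) : ℤ) * p : ℤ) : ℝ) / (p.toNat : ℝ) := by
        rw [heq]; norm_cast; rw [Int.toNat_of_nonneg hpz.le]
      exact ih p.toNat (by omega) (n+1) _ this
  rintro ⟨r, hr⟩
  exact key r.den 0 r.num (by rw [← hr]; push_cast [Rat.cast_def]; ring)
end

section
/- Let (B_n)_{n≥0} be a sequence of positive integers satisfying B_{n+1} ≥ B_n(B_n + 1) for all n ≥ 0. Then the sum of the alternating series α = Σ_{n=0}^∞ (−1)^n / B_n is irrational. -/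
/-!
The tails `t M = ∑ₖ (-1)^k / B (M + k)` satisfy `t M + t (M + 1) = 1 / B M` and, being alternating
series with strictly decreasing terms, `0 < t M < 1 / B M`. The growth condition upgrades this to
`B N * t (N + 1) < t N`. If `t 0 = p / q`, the recurrence makes `q * B 0 ⋯ B (N - 1) * t N` an
integer for every `N`; these integers are positive and strictly decreasing, which is impossible.
-/

open Finset Filter

theorem StrictAnti.tsum_alternating_mem_Ioo {f : ℕ → ℝ} (hfa : StrictAnti f) (hfs : Summable f) :
    ∑' k, (-1) ^ k * f k ∈ Set.Ioo 0 (f 0) := by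
  have hf0 : ∀ k, 0 ≤ f k := hfa.antitone.le_of_tendsto hfs.tendsto_atTop_zero
  have hsum : Summable fun k => (-1) ^ k * f k :=
    .of_norm (by simpa [abs_of_nonneg (hf0 _)] using hfs)
  have hlim := hsum.hasSum.tendsto_sum_nat
  have hlow := hfa.antitone.alternating_series_le_tendsto hlim 1
  have hup := hfa.antitone.tendsto_le_alternating_series hlim 1
  simp only [sum_range_succ, sum_range_zero, zero_add, mul_one, pow_zero, pow_one, neg_one_sq,
    one_mul, neg_one_mul] at hlow hup
  constructor <;> linarith [hfa (show 0 < 1 by norm_num), hfa (show 1 < 2 by norm_num)]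

theorem irrational_of_tail_recurrence {b : ℕ → ℕ} {t : ℕ → ℝ} (hb : ∀ n, 0 < b n)
    (hrec : ∀ n, t n + t (n + 1) = (b n : ℝ)⁻¹) (hpos : ∀ n, 0 < t n)
    (hdesc : ∀ n, b n * t (n + 1) < t n) : Irrational (t 0) := by
  rintro ⟨r, hr⟩
  set c : ℕ → ℝ := fun N => r.den * (∏ i ∈ range N, (b i : ℝ)) * t N with hc
  have hint : ∀ N, ∃ m : ℤ, (m : ℝ) = c N := by
    intro N
    induction N with
    | zero => exact ⟨r.num, by
        simp only [c, range_zero, prod_empty, mul_one, ← hr, Rat.cast_def]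
        field_simp⟩
    | succ N ih =>
      obtain ⟨m, hm⟩ := ih
      -- `c (N + 1) = q * (b 0 ⋯ b (N - 1)) - b N * c N` by the recurrence
      refine ⟨r.den * ∏ i ∈ range N, (b i : ℤ) - b N * m, ?_⟩
      have hbN : (b N : ℝ) ≠ 0 := by exact_mod_cast (hb N).ne'
      have ht : t (N + 1) = (b N : ℝ)⁻¹ - t N := by linarith [hrec N]
      simp only [hc, Int.cast_sub, Int.cast_mul, Int.cast_prod, Int.cast_natCast, hm,
        prod_range_succ, ht]
      field_simp
  choose m hm using hint
  have hden N : (0 : ℝ) < r.den * ∏ i ∈ range N, (b i : ℝ) :=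
    mul_pos (by exact_mod_cast r.den_pos) (prod_pos fun i _ => by exact_mod_cast hb i)
  have hcpos N : 0 < c N := mul_pos (hden N) (hpos N)
  have hcdec N : c (N + 1) < c N := by
    calc c (N + 1) = r.den * (∏ i ∈ range N, (b i : ℝ)) * (b N * t (N + 1)) := by
          simp only [hc, prod_range_succ]; ring
      _ < c N := mul_lt_mul_of_pos_left (hdesc N) (hden N)
  refine not_strictAnti_of_wellFoundedLT (fun N => (m N).toNat)
    (strictAnti_nat_of_succ_lt fun N => ?_)
  rw [Int.toNat_lt_toNat (by exact_mod_cast (hm N).symm ▸ hcpos N)]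
  exact_mod_cast (hm (N + 1)).symm ▸ (hm N).symm ▸ hcdec N

section GrowthCondition

variable {B : ℕ → ℕ}

theorem two_pow_le_of_mul_succ_le (hBpos : ∀ n, 0 < B n) (hB : ∀ n, B n * (B n + 1) ≤ B (n + 1))
    (n : ℕ) : 2 ^ n ≤ B n := by
  induction n with
  | zero => exact hBpos 0
  | succ n ih =>
    calc 2 ^ (n + 1) ≤ B n * 2 := by rw [pow_succ]; omega
      _ ≤ B n * (B n + 1) := Nat.mul_le_mul_left _ (by linarith [hBpos n])
      _ ≤ B (n + 1) := hB n

theorem strictMono_of_mul_succ_le (hBpos : ∀ n, 0 < B n) (hB : ∀ n, B n * (B n + 1) ≤ B (n + 1)) :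
    StrictMono B :=
  strictMono_nat_of_lt_succ fun n => by nlinarith [hBpos n, hB n]

theorem summable_inv_of_mul_succ_le (hBpos : ∀ n, 0 < B n)
    (hB : ∀ n, B n * (B n + 1) ≤ B (n + 1)) : Summable fun n => (B n : ℝ)⁻¹ := by
  refine summable_geometric_two.of_nonneg_of_le (fun n => by positivity) fun n => ?_
  rw [one_div, inv_pow]
  exact inv_anti₀ (by positivity) (by exact_mod_cast two_pow_le_of_mul_succ_le hBpos hB n)

theorem Summable.inv_natCast_comp_add_left (hs : Summable fun n => (B n : ℝ)⁻¹) (M : ℕ) :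
    Summable fun k => (B (M + k) : ℝ)⁻¹ := by
  simpa [add_comm M] using (summable_nat_add_iff M).mpr hs

noncomputable def altTail (B : ℕ → ℕ) (M : ℕ) : ℝ := ∑' k, (-1) ^ k * (B (M + k) : ℝ)⁻¹

theorem altTail_add_altTail_succ (hs : Summable fun n => (B n : ℝ)⁻¹) (M : ℕ) :
    altTail B M + altTail B (M + 1) = (B M : ℝ)⁻¹ := by
  have hsM : Summable fun k => (-1 : ℝ) ^ k * (B (M + k) : ℝ)⁻¹ :=
    .of_norm (by simpa using hs.inv_natCast_comp_add_left M)
  rw [altTail, hsM.tsum_eq_zero_add, altTail]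
  simp only [pow_succ, ← add_assoc, add_right_comm M _ 1]
  simp only [pow_zero, add_zero, one_mul, mul_neg, mul_one, neg_mul, tsum_neg,
    neg_add_cancel_right]

theorem altTail_mem_Ioo (hBpos : ∀ n, 0 < B n) (hB : ∀ n, B n * (B n + 1) ≤ B (n + 1)) (M : ℕ) :
    altTail B M ∈ Set.Ioo 0 (B M : ℝ)⁻¹ := by
  have hanti : StrictAnti fun k => (B (M + k) : ℝ)⁻¹ := fun i j hij =>
    inv_strictAnti₀ (by exact_mod_cast hBpos _)
      (by exact_mod_cast strictMono_of_mul_succ_le hBpos hB (by omega : M + i < M + j))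
  simpa [altTail] using hanti.tsum_alternating_mem_Ioo
    ((summable_inv_of_mul_succ_le hBpos hB).inv_natCast_comp_add_left M)

theorem mul_altTail_succ_lt (hBpos : ∀ n, 0 < B n) (hB : ∀ n, B n * (B n + 1) ≤ B (n + 1))
    (n : ℕ) : B n * altTail B (n + 1) < altTail B n := by
  have hT := (altTail_mem_Ioo hBpos hB (n + 1)).2
  have hrec := altTail_add_altTail_succ (summable_inv_of_mul_succ_le hBpos hB) n
  have hb : (0 : ℝ) < B n := by exact_mod_cast hBpos n
  have hgrow : (B n : ℝ) * (B n + 1) ≤ B (n + 1) := by exact_mod_cast hB n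
  have : (B n + 1) * altTail B (n + 1) < (B n : ℝ)⁻¹ := by
    calc (B n + 1) * altTail B (n + 1) < (B n + 1) * (B (n + 1) : ℝ)⁻¹ := by gcongr
      _ ≤ (B n + 1) * ((B n : ℝ) * (B n + 1))⁻¹ := by gcongr
      _ = (B n : ℝ)⁻¹ := by field_simp
  linarith

end GrowthCondition

/-- If `B_{n+1} ≥ B_n (B_n + 1)` for all `n`, then `∑ (-1)^n / B_n` is irrational. -/
theorem stmt_2 (B : ℕ → ℕ) (hBpos : ∀ n : ℕ, 0 < B n)
    (hB : ∀ n : ℕ, B n * (B n + 1) ≤ B (n + 1)) :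
    Irrational (∑' n : ℕ, (-1 : ℝ) ^ n / (B n : ℝ)) := by
  have h := irrational_of_tail_recurrence hBpos
    (altTail_add_altTail_succ (summable_inv_of_mul_succ_le hBpos hB))
    (fun n => (altTail_mem_Ioo hBpos hB n).1) (mul_altTail_succ_lt hBpos hB)
  simpa [altTail, div_eq_mul_inv] using h
end

section
/- Let (B_n)_{n≥0} be a sequence of positive integers with B_0 ≥ 2 satisfying B_{n+1} + 1 = B_n(B_n + 1) for all n ≥ 0. Then Σ_{n=0}^∞ (−1)^n / B_n = 1/(B_0 + 1); in particular the sum is rational. (This shows the irrationality criterion B_{n+1} ≥ B_n(B_n+1) is sharp.) -/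
open Filter Topology

/-- Sharpness: if `B_{n+1} + 1 = B_n (B_n + 1)` for all `n`, then
`∑ (-1)^n / B_n = 1/(B_0 + 1)` is rational. -/
theorem stmt_3 (B : ℕ → ℕ) (hB0 : 2 ≤ B 0)
    (hB : ∀ n : ℕ, B (n + 1) + 1 = B n * (B n + 1)) :
    (∑' n : ℕ, (-1 : ℝ) ^ n / (B n : ℝ)) = 1 / ((B 0 : ℝ) + 1) := by
  have h2 : ∀ n, 2 ≤ B n := by
    intro n
    induction n with
    | zero => exact hB0
    | succ n ih =>
      have h := hB n
      nlinarith
  have hgrow : ∀ n, 2 ^ (n + 1) ≤ B n := by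
    intro n
    induction n with
    | zero => simpa using hB0
    | succ n ih =>
      have h := hB n
      have h2n : 2 ≤ B n := h2 n
      have : 2 ^ (n + 2) = 2 * 2 ^ (n + 1) := by ring
      nlinarith
  have hpos : ∀ n, (0 : ℝ) < (B n : ℝ) := by
    intro n
    have := h2 n
    exact_mod_cast lt_of_lt_of_le (by norm_num) this
  set a : ℕ → ℝ := fun n => 1 / ((B n : ℝ) + 1) with ha_def
  have key : ∀ n, (-1 : ℝ) ^ n / (B n : ℝ) =
      (-1 : ℝ) ^ n * a n - (-1 : ℝ) ^ (n + 1) * a (n + 1) := by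
    intro n
    have hb := hpos n
    have hb1 : (0 : ℝ) < (B n : ℝ) + 1 := by linarith
    have hb2 : (0 : ℝ) < (B (n + 1) : ℝ) + 1 := by have := hpos (n + 1); linarith
    have hcast : ((B (n + 1) : ℝ) + 1) = (B n : ℝ) * ((B n : ℝ) + 1) := by
      exact_mod_cast hB n
    have hinv : 1 / (B n : ℝ) = a n + a (n + 1) := by
      simp only [ha_def]
      rw [hcast]
      field_simp
    calc (-1 : ℝ) ^ n / (B n : ℝ) = (-1 : ℝ) ^ n * (a n + a (n + 1)) := by
          rw [div_eq_mul_one_div, hinv]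
      _ = (-1 : ℝ) ^ n * a n - (-1 : ℝ) ^ (n + 1) * a (n + 1) := by
          rw [pow_succ]; ring
  have htel : ∀ N, ∑ n ∈ Finset.range N, (-1 : ℝ) ^ n / (B n : ℝ) =
      a 0 - (-1 : ℝ) ^ N * a N := by
    intro N
    have h := Finset.sum_range_sub' (fun n => (-1 : ℝ) ^ n * a n) N
    rw [Finset.sum_congr rfl fun n _ => key n, h]
    norm_num
  have haN : Tendsto a atTop (𝓝 0) := by
    have hle : ∀ n, a n ≤ (1 / 2 : ℝ) ^ n := by
      intro n
      have hgn : (2 : ℝ) ^ n ≤ (B n : ℝ) + 1 := by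
        have : (2 : ℕ) ^ n ≤ B n + 1 := by
          calc (2:ℕ) ^ n ≤ 2 ^ (n + 1) := Nat.pow_le_pow_right (by norm_num) (Nat.le_succ n)
          _ ≤ B n := hgrow n
          _ ≤ B n + 1 := Nat.le_succ _
        exact_mod_cast this
      have h2n : (0 : ℝ) < 2 ^ n := by positivity
      simp only [ha_def, div_pow, one_pow]
      exact one_div_le_one_div_of_le h2n hgn
    have hnn : ∀ n, 0 ≤ a n := by
      intro n
      have := hpos n
      simp only [ha_def]
      positivity
    exact squeeze_zero hnn hle (tendsto_pow_atTop_nhds_zero_of_lt_one (by norm_num) (by norm_num))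
  have hterm : Tendsto (fun N => (-1 : ℝ) ^ N * a N) atTop (𝓝 0) := by
    rw [tendsto_zero_iff_norm_tendsto_zero]
    have : (fun N => ‖(-1 : ℝ) ^ N * a N‖) = fun N => a N := by
      funext N
      rw [norm_mul, norm_pow, norm_neg, norm_one, one_pow, one_mul,
        Real.norm_of_nonneg]
      have := hpos N
      simp only [ha_def]; positivity
    rw [this]
    exact haN
  have hlim : Tendsto (fun N => ∑ n ∈ Finset.range N, (-1 : ℝ) ^ n / (B n : ℝ))
      atTop (𝓝 (a 0)) := by
    simp only [htel]
    have := tendsto_const_nhds (x := a 0) (f := atTop (α := ℕ)) |>.sub hterm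
    simpa using this
  have hsum : Summable (fun n : ℕ => (-1 : ℝ) ^ n / (B n : ℝ)) := by
    apply Summable.of_norm
    apply Summable.of_nonneg_of_le (fun n => norm_nonneg _) _ summable_geometric_two
    intro n
    have hb := hpos n
    rw [norm_div, norm_pow, norm_neg, norm_one, one_pow,
      Real.norm_of_nonneg hb.le]
    have hgn : (2 : ℝ) ^ n ≤ (B n : ℝ) := by
      have : (2:ℕ) ^ n ≤ B n :=
        le_trans (Nat.pow_le_pow_right (by norm_num) (Nat.le_succ n)) (hgrow n)
      exact_mod_cast this
    have h2n : (0 : ℝ) < 2 ^ n := by positivity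
    calc 1 / (B n : ℝ) ≤ 1 / 2 ^ n := one_div_le_one_div_of_le h2n hgn
      _ = (1 / 2 : ℝ) ^ n := by rw [div_pow, one_pow]
  have := tendsto_nhds_unique hsum.hasSum.tendsto_sum_nat hlim
  simpa [ha_def] using this
end

section
/- The shifted-Fermat-number constant F := Σ_{n=0}^∞ (−1)^n / (2^{2^n} − 1) = 1 − 1/3 + 1/15 − 1/255 + ⋯ is irrational. -/
/-!
Write `b n = 2 ^ 2 ^ n - 1`. These numbers form a divisibility chain with
`b (n + 1) = b n * (b n + 2)`, so `b (2k)` times the partial sum `S` of the terms `n ≤ 2k` is an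
integer, while the alternating series bounds give
`0 < b (2k) * (S - F) ≤ b (2k) / b (2k + 1) = 1 / (b (2k) + 2)`.
If `F = p / q`, then `q * b (2k) * (S - F)` would be a nonzero integer tending to `0`.
-/

open Finset Filter Topology

theorem irrational_of_tendsto_intCast_mul_sub {x : ℝ} {d z : ℕ → ℤ}
    (hne : ∀ k, (d k : ℝ) * x ≠ z k)
    (hlim : Tendsto (fun k ↦ (d k : ℝ) * x - z k) atTop (𝓝 0)) : Irrational x := by
  rintro ⟨q, rfl⟩
  have hden : (q.den : ℝ) ≠ 0 := by positivity
  have hint (k : ℕ) : ((d k * q.num - q.den * z k : ℤ) : ℝ) = q.den * (d k * q - z k) := by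
    rw [Rat.cast_def]
    push_cast
    field_simp
  have hlimℤ : Tendsto (fun k ↦ d k * q.num - q.den * z k) atTop (𝓝 0) := by
    rw [Int.isClosedEmbedding_coe_real.tendsto_nhds_iff]
    simpa [Function.comp_def, hint] using hlim.const_mul (q.den : ℝ)
  rw [nhds_discrete, tendsto_pure] at hlimℤ
  obtain ⟨k, hk⟩ := hlimℤ.exists
  have hzero := hint k
  rw [hk, Int.cast_zero, zero_eq_mul, sub_eq_zero] at hzero
  exact hne k (hzero.resolve_left hden)

section AlternatingSeries

variable {E : Type*} [Ring E] [PartialOrder E] [IsOrderedRing E]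
  [TopologicalSpace E] [OrderClosedTopology E] {l : E} {f : ℕ → E}

theorem StrictAnti.tendsto_lt_alternating_series
    (hfl : Tendsto (fun n ↦ ∑ i ∈ range n, (-1) ^ i * f i) atTop (𝓝 l))
    (hfa : StrictAnti f) (k : ℕ) : l < ∑ i ∈ range (2 * k + 1), (-1) ^ i * f i := by
  have hnext := hfa.antitone.tendsto_le_alternating_series hfl (k + 1)
  have hsplit : ∑ i ∈ range (2 * (k + 1) + 1), (-1) ^ i * f i =
      ∑ i ∈ range (2 * k + 1), (-1) ^ i * f i - (f (2 * k + 1) - f (2 * k + 2)) := by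
    simp only [show 2 * (k + 1) + 1 = 2 * k + 1 + 1 + 1 by ring, sum_range_succ, pow_mul,
      pow_succ, pow_zero, mul_neg, mul_one, neg_neg, one_pow, one_mul, neg_mul]
    abel
  have hdrop : 0 < f (2 * k + 1) - f (2 * k + 2) := sub_pos.mpr (hfa (by lia))
  exact hnext.trans_lt (hsplit ▸ sub_lt_self _ hdrop)

theorem Antitone.alternating_series_sub_tendsto_le
    (hfl : Tendsto (fun n ↦ ∑ i ∈ range n, (-1) ^ i * f i) atTop (𝓝 l))
    (hfa : Antitone f) (k : ℕ) :
    ∑ i ∈ range (2 * k + 1), (-1) ^ i * f i - l ≤ f (2 * k + 1) := by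
  have hnext := hfa.alternating_series_le_tendsto hfl (k + 1)
  have hsplit : ∑ i ∈ range (2 * (k + 1)), (-1) ^ i * f i =
      ∑ i ∈ range (2 * k + 1), (-1) ^ i * f i - f (2 * k + 1) := by
    simp only [show 2 * (k + 1) = 2 * k + 1 + 1 by ring, sum_range_succ, pow_mul, pow_succ,
      pow_zero, mul_neg, mul_one, neg_neg, one_pow, one_mul, neg_mul]
    abel
  rw [hsplit] at hnext
  rwa [sub_le_comm]

end AlternatingSeries

theorem exists_intCast_eq_mul_sum_div {K ι : Type*} [Field K] [CharZero K] {s : Finset ι}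
    {b c : ι → ℤ} {D : ℤ} (hb : ∀ i ∈ s, b i ∣ D) :
    ∃ z : ℤ, (D : K) * ∑ i ∈ s, (c i : K) / b i = z := by
  refine ⟨∑ i ∈ s, c i * (D / b i), ?_⟩
  push_cast
  rw [mul_sum]
  refine sum_congr rfl fun i hi ↦ ?_
  rcases eq_or_ne (b i) 0 with h0 | h0
  · simp [h0]
  · rw [Int.cast_div (hb i hi) (by exact_mod_cast h0)]
    ring

theorem irrational_tsum_neg_one_pow_div_of_dvd {b : ℕ → ℤ} (hpos : 0 < b 0)
    (hmono : StrictMono b) (hdvd : ∀ m n, m ≤ n → b m ∣ b n)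
    (hratio : Tendsto (fun n ↦ (b n : ℝ) / b (n + 1)) atTop (𝓝 0)) :
    Irrational (∑' n, (-1 : ℝ) ^ n / b n) := by
  have hbpos (n : ℕ) : (0 : ℝ) < b n := by
    exact_mod_cast hpos.trans_le (hmono.monotone n.zero_le)
  set f : ℕ → ℝ := fun n ↦ (b n : ℝ)⁻¹
  have hfa : StrictAnti f := fun m n h ↦ inv_strictAnti₀ (hbpos m) (by exact_mod_cast hmono h)
  have hsum : Summable f := by
    refine summable_of_ratio_test_tendsto_lt_one zero_lt_one
      (.of_forall fun n ↦ inv_ne_zero (hbpos n).ne') (hratio.congr fun n ↦ ?_)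
    simp only [f, Real.norm_eq_abs, abs_inv, abs_of_pos (hbpos _), inv_div_inv]
  simp_rw [div_eq_mul_inv]
  set l := ∑' n, (-1 : ℝ) ^ n * f n
  have hl : Tendsto (fun n ↦ ∑ i ∈ range n, (-1) ^ i * f i) atTop (𝓝 l) :=
    hsum.tendsto_alternating_series_tsum
  set S : ℕ → ℝ := fun k ↦ ∑ i ∈ range (2 * k + 1), (-1) ^ i * f i
  have hS (k : ℕ) : ∃ z : ℤ, (b (2 * k) : ℝ) * S k = z := by
    simpa [S, f, div_eq_mul_inv] using
      exists_intCast_eq_mul_sum_div (K := ℝ) (c := fun i ↦ (-1) ^ i)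
        fun i hi ↦ hdvd i (2 * k) (Nat.lt_succ_iff.mp (mem_range.mp hi))
  choose z hz using hS
  refine irrational_of_tendsto_intCast_mul_sub (d := fun k ↦ b (2 * k)) (z := z)
    (fun k ↦ hz k ▸ (mul_lt_mul_of_pos_left (hfa.tendsto_lt_alternating_series hl k)
      (hbpos _)).ne) ?_
  have hgap : Tendsto (fun k ↦ (b (2 * k) : ℝ) * (S k - l)) atTop (𝓝 0) :=
    squeeze_zero
      (fun k ↦ mul_nonneg (hbpos _).le
        (sub_nonneg.mpr (hfa.antitone.tendsto_le_alternating_series hl k)))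
      (fun k ↦ mul_le_mul_of_nonneg_left
        (hfa.antitone.alternating_series_sub_tendsto_le hl k) (hbpos _).le)
      (hratio.comp (tendsto_id.const_mul_atTop' two_pos))
  simpa [← hz, mul_sub] using hgap.neg

theorem pow_two_pow_succ_sub_one {R : Type*} [CommRing R] (x : R) (n : ℕ) :
    x ^ 2 ^ (n + 1) - 1 = (x ^ 2 ^ n - 1) * (x ^ 2 ^ n + 1) := by
  rw [pow_succ, pow_mul]
  ring

theorem tendsto_two_pow_two_pow_sub_one_div_succ :
    Tendsto (fun n : ℕ ↦ ((2 : ℝ) ^ 2 ^ n - 1) / (2 ^ 2 ^ (n + 1) - 1)) atTop (𝓝 0) := by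
  have hne (n : ℕ) : (2 : ℝ) ^ 2 ^ n - 1 ≠ 0 :=
    (sub_pos.mpr (one_lt_pow₀ one_lt_two (by positivity))).ne'
  simp_rw [pow_two_pow_succ_sub_one, div_mul_cancel_left₀ (hne _)]
  exact tendsto_inv_atTop_zero.comp <| tendsto_atTop_add_const_right _ 1 <|
    (tendsto_pow_atTop_atTop_of_one_lt one_lt_two).comp
      (tendsto_pow_atTop_atTop_of_one_lt one_lt_two)

/-- The shifted-Fermat-number constant `F = ∑ (-1)^n / (2^(2^n) - 1)` is irrational. -/
theorem stmt_4 :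
    Irrational (∑' n : ℕ, (-1 : ℝ) ^ n / ((2 : ℝ) ^ (2 ^ n) - 1)) := by
  have hmono : StrictMono fun n : ℕ ↦ (2 : ℤ) ^ 2 ^ n - 1 := fun m n h ↦
    sub_lt_sub_right (pow_lt_pow_right₀ one_lt_two (Nat.pow_lt_pow_right one_lt_two h)) 1
  have hdvd (m n : ℕ) (h : m ≤ n) : (2 : ℤ) ^ 2 ^ m - 1 ∣ 2 ^ 2 ^ n - 1 :=
    dvd_pow_sub_one_of_dvd (pow_dvd_pow 2 h)
  simpa using irrational_tsum_neg_one_pow_div_of_dvd (by norm_num) hmono hdvd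
    (by simpa using tendsto_two_pow_two_pow_sub_one_div_succ)
end

section
/- Let A_0, A_1, A_2, … be positive integers satisfying A_{n+1} > A_n for all n ≥ 0. Then the sum α = Σ_{n=0}^∞ (−1)^n / (A_0 A_1 ⋯ A_n) is irrational. -/
/-!
Write `α_k` for the sum of the series built on the tail `A_k < A_{k+1} < ⋯`. Splitting off the
first term gives `A_k α_k = 1 - α_{k+1}`, and feeding the alternating series bound
`α_k ≤ 1 / A_k` back into this recursion sharpens it to `0 < α_k < 1 / A_k`.
If `α = α_0 = p / q`, the recursion keeps every `q α_k` an integer;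
but `A_q > q`, so `0 < q α_q < q / A_q < 1`.
-/

open Finset Nat

noncomputable def pierceSum (A : ℕ → ℕ) : ℝ :=
  ∑' n : ℕ, (-1 : ℝ) ^ n / ∏ j ∈ range (n + 1), (A j : ℝ)

namespace PierceSum

variable {A : ℕ → ℕ}

lemma succ_le_apply (hA : StrictMono A) (h0 : 0 < A 0) (n : ℕ) : n + 1 ≤ A n := by
  simpa using (Nat.add_le_add_left h0 n).trans (hA.add_le_nat n 0)

lemma apply_pos (hA : StrictMono A) (h0 : 0 < A 0) (n : ℕ) : 0 < A n :=
  h0.trans_le (hA.monotone n.zero_le)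

lemma strictMono_shift (hA : StrictMono A) (k : ℕ) : StrictMono fun n => A (k + n) :=
  hA.comp (strictMono_id.const_add k)

lemma factorial_le_prod (hA : StrictMono A) (h0 : 0 < A 0) (n : ℕ) :
    ((n + 1)! : ℝ) ≤ ∏ j ∈ range (n + 1), (A j : ℝ) := by
  rw [← prod_range_add_one_eq_factorial]
  push_cast
  exact prod_le_prod (fun _ _ => by positivity) fun j _ => by exact_mod_cast succ_le_apply hA h0 j

lemma prod_range_pos (hA : StrictMono A) (h0 : 0 < A 0) (n : ℕ) :
    0 < ∏ j ∈ range (n + 1), (A j : ℝ) :=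
  (Nat.cast_pos.2 (factorial_pos _)).trans_le (factorial_le_prod hA h0 n)

lemma monotone_prod (hA : StrictMono A) (h0 : 0 < A 0) :
    Monotone fun n => ∏ j ∈ range (n + 1), (A j : ℝ) :=
  monotone_nat_of_le_succ fun n => by
    rw [prod_range_succ _ (n + 1)]
    exact le_mul_of_one_le_right (prod_range_pos hA h0 n).le
      (by exact_mod_cast (succ_le_apply hA h0 (n + 1)).trans' (by omega))

lemma summable (hA : StrictMono A) (h0 : 0 < A 0) :
    Summable fun n => (-1 : ℝ) ^ n / ∏ j ∈ range (n + 1), (A j : ℝ) := by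
  refine (Real.summable_pow_div_factorial 1).of_norm_bounded fun n => ?_
  rw [norm_div, norm_pow, norm_neg, norm_one, one_pow,
    Real.norm_of_nonneg (prod_range_pos hA h0 n).le]
  exact one_div_le_one_div_of_le (by positivity)
    ((Nat.cast_le.2 (factorial_le n.le_succ)).trans (factorial_le_prod hA h0 n))

lemma mul_pierceSum (hA : StrictMono A) (h0 : 0 < A 0) :
    A 0 * pierceSum A = 1 - pierceSum fun n => A (1 + n) := by
  have hA0 : (A 0 : ℝ) ≠ 0 := by positivity
  have hterm (n : ℕ) : (-1 : ℝ) ^ (n + 1) / ∏ j ∈ range (n + 1 + 1), (A j : ℝ) =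
      -(A 0 : ℝ)⁻¹ * ((-1 : ℝ) ^ n / ∏ j ∈ range (n + 1), (A (1 + j) : ℝ)) := by
    have := (prod_range_pos (strictMono_shift hA 1) (apply_pos hA h0 _) n).ne'
    rw [prod_range_succ' _ (n + 1), pow_succ]
    simp only [add_comm _ 1]
    field_simp
  rw [pierceSum, (summable hA h0).tsum_eq_zero_add, tsum_congr hterm, tsum_mul_left, pierceSum,
    zero_add, prod_range_one, pow_zero]
  field_simp
  exact (sub_eq_add_neg _ _).symm

lemma pierceSum_le_inv (hA : StrictMono A) (h0 : 0 < A 0) : pierceSum A ≤ (A 0 : ℝ)⁻¹ := by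
  have hlim := (summable hA h0).hasSum.tendsto_sum_nat
  simp only [div_eq_mul_inv] at hlim
  have hanti : Antitone fun n => (∏ j ∈ range (n + 1), (A j : ℝ))⁻¹ :=
    fun m n hmn => inv_anti₀ (prod_range_pos hA h0 m) (monotone_prod hA h0 hmn)
  simpa [pierceSum, div_eq_mul_inv] using hanti.tendsto_le_alternating_series hlim 0

lemma pierceSum_pos (hA : StrictMono A) (h0 : 0 < A 0) : 0 < pierceSum A := by
  have htail : (pierceSum fun n => A (1 + n)) < 1 :=
    (pierceSum_le_inv (strictMono_shift hA 1) (apply_pos hA h0 1)).trans_lt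
      (inv_lt_one_of_one_lt₀ (by exact_mod_cast succ_le_apply hA h0 1))
  exact pos_of_mul_pos_right (mul_pierceSum hA h0 ▸ sub_pos.2 htail) (Nat.cast_nonneg _)

lemma mul_pierceSum_lt_one (hA : StrictMono A) (h0 : 0 < A 0) : A 0 * pierceSum A < 1 := by
  rw [mul_pierceSum hA h0]
  linarith [pierceSum_pos (strictMono_shift hA 1) (apply_pos hA h0 1)]

lemma exists_int_mul_pierceSum_shift (hA : StrictMono A) (h0 : 0 < A 0) {c : ℤ}
    (hc : ∃ z : ℤ, c * pierceSum A = z) (k : ℕ) :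
    ∃ z : ℤ, c * pierceSum (fun n => A (k + n)) = z := by
  induction k with
  | zero => simpa using hc
  | succ k ih =>
    obtain ⟨z, hz⟩ := ih
    have hrec := mul_pierceSum (strictMono_shift hA k) (apply_pos hA h0 k)
    simp only [add_zero, ← add_assoc] at hrec
    refine ⟨c - A k * z, ?_⟩
    push_cast
    linear_combination (c : ℝ) * hrec - (A k : ℝ) * hz

end PierceSum

open PierceSum in
/-- If `A_0 < A_1 < A_2 < ⋯` are positive integers, then the Pierce-type series
`∑ (-1)^n / (A_0 A_1 ⋯ A_n)` is irrational. -/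
theorem stmt_6 (A : ℕ → ℕ) (hApos : ∀ n : ℕ, 0 < A n) (hA : ∀ n : ℕ, A n < A (n + 1)) :
    Irrational (∑' n : ℕ, (-1 : ℝ) ^ n / ∏ j ∈ Finset.range (n + 1), (A j : ℝ)) := by
  have hmono : StrictMono A := strictMono_nat_of_lt_succ hA
  rintro ⟨r, hr⟩
  have hden : ∃ z : ℤ, (r.den : ℤ) * pierceSum A = z := ⟨r.num, by
    rw [pierceSum, ← hr, Rat.cast_def, Int.cast_natCast, mul_div_cancel₀ _ (by positivity)]⟩
  obtain ⟨z, hz⟩ := exists_int_mul_pierceSum_shift hmono (hApos 0) hden r.den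
  have hshift := strictMono_shift hmono r.den
  have htail_pos := pierceSum_pos hshift (hApos _)
  have hden_le : (r.den : ℝ) ≤ A r.den := by exact_mod_cast hmono.le_apply
  have hpos : (0 : ℝ) < z := hz ▸ mul_pos (by positivity) htail_pos
  have hlt : (z : ℝ) < 1 := hz ▸ (mul_le_mul_of_nonneg_right hden_le htail_pos.le).trans_lt
    (mul_pierceSum_lt_one hshift (hApos _))
  norm_cast at hpos hlt
  omega
end

section
/- Let A_0, A_1, A_2, … be positive integers with A_n ≥ 2 for all n ≥ 1, and suppose there exist positive integers a_1, a_2, a_3, … such that, with convergents p_n/q_n defined by p_0 = 0, q_0 = 1, p_1 = 1, q_1 = a_1, p_{n+1} = a_{n+1} p_n + p_{n-1}, q_{n+1} = a_{n+1} q_n + q_{n-1}, one has Σ_{i=0}^{n} (−1)^i / (A_0 A_1 ⋯ A_i) = p_{n+1}/q_{n+1} for all n ≥ 0. Then q_n q_{n+1} = A_0 A_1 ⋯ A_n for all n ≥ 0, and q_n divides a_{n+2} for all n ≥ 0. -/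
/-!
Consecutive convergents satisfy `p_{n+1} q_n - p_n q_{n+1} = (-1)^n`, so
`p_{n+1}/q_{n+1} - p_n/q_n = (-1)^n / (q_n q_{n+1})`. Since the partial sums are the convergents
(with the empty sum matching `p_0/q_0 = 0`), this difference is also the `n`-th term
`(-1)^n / (A_0 ⋯ A_n)` of the series, whence `q_n q_{n+1} = A_0 ⋯ A_n`. Dividing two consecutive
instances gives `q_{n+2} = q_n A_{n+1}`, so `q_n ∣ q_{n+2} = a_{n+2} q_{n+1} + q_n`, and as
consecutive denominators are coprime, `q_n ∣ a_{n+2}`.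
-/

open Finset

theorem convergents_det {R : Type*} [CommRing R] {a p q : ℕ → R}
    (hp0 : p 0 = 0) (hq0 : q 0 = 1) (hp1 : p 1 = 1)
    (hp : ∀ n, p (n + 2) = a (n + 2) * p (n + 1) + p n)
    (hq : ∀ n, q (n + 2) = a (n + 2) * q (n + 1) + q n) (n : ℕ) :
    p (n + 1) * q n - p n * q (n + 1) = (-1) ^ n := by
  induction n with
  | zero => simp [hp0, hq0, hp1]
  | succ n ih => rw [hp, hq, pow_succ, ← ih]; ring

theorem convergents_sub {K : Type*} [Field K] {p q : ℕ → K} {n : ℕ}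
    (hdet : p (n + 1) * q n - p n * q (n + 1) = (-1) ^ n) (hqn : q n ≠ 0)
    (hqn' : q (n + 1) ≠ 0) :
    p (n + 1) / q (n + 1) - p n / q n = (-1) ^ n / (q n * q (n + 1)) := by
  rw [div_sub_div _ _ hqn' hqn, ← hdet]
  ring

theorem denominators_pos {a q : ℕ → ℕ} (hq0 : q 0 = 1) (hq1 : q 1 = a 1)
    (hq : ∀ n, q (n + 2) = a (n + 2) * q (n + 1) + q n) (ha : ∀ n, 0 < a (n + 1)) (n : ℕ) :
    0 < q n := by
  induction n using Nat.twoStepInduction with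
  | zero => simp [hq0]
  | one => simpa [hq1] using ha 0
  | more n _ ih => rw [hq]; exact Nat.add_pos_left (Nat.mul_pos (ha _) ih) _

theorem denominators_coprime {a q : ℕ → ℕ} (hq0 : q 0 = 1)
    (hq : ∀ n, q (n + 2) = a (n + 2) * q (n + 1) + q n) (n : ℕ) :
    Nat.Coprime (q n) (q (n + 1)) := by
  induction n with
  | zero => simp [hq0]
  | succ n ih =>
    rw [hq, add_comm (a (n + 2) * _), mul_comm (a (n + 2))]
    exact (Nat.coprime_add_mul_left_right _ _ _).mpr ih.symm

theorem dvd_partialQuotient_of_dvd {a q : ℕ → ℕ} (hq0 : q 0 = 1)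
    (hq : ∀ n, q (n + 2) = a (n + 2) * q (n + 1) + q n) {n : ℕ} (h : q n ∣ q (n + 2)) :
    q n ∣ a (n + 2) := by
  rw [hq, Nat.dvd_add_left (dvd_refl _)] at h
  exact (denominators_coprime hq0 hq n).dvd_of_dvd_mul_right h

theorem eq_sub_of_sum_range_succ_eq {M : Type*} [AddCommGroup M] {f c : ℕ → M} (hc0 : c 0 = 0)
    (h : ∀ n, ∑ i ∈ range (n + 1), f i = c (n + 1)) (n : ℕ) : f n = c (n + 1) - c n := by
  cases n with
  | zero => simpa [hc0] using h 0
  | succ n => rw [← h, ← h, sum_range_succ_sub_sum]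

theorem stmt_8_general (A : ℕ → ℕ)
    (a p q : ℕ → ℕ) (ha : ∀ n : ℕ, 0 < a (n + 1))
    (hp0 : p 0 = 0) (hq0 : q 0 = 1) (hp1 : p 1 = 1) (hq1 : q 1 = a 1)
    (hp : ∀ n : ℕ, p (n + 2) = a (n + 2) * p (n + 1) + p n)
    (hq : ∀ n : ℕ, q (n + 2) = a (n + 2) * q (n + 1) + q n)
    (heq : ∀ n : ℕ,
      (∑ i ∈ Finset.range (n + 1), (-1 : ℝ) ^ i / ∏ j ∈ Finset.range (i + 1), (A j : ℝ))
        = (p (n + 1) : ℝ) / (q (n + 1) : ℝ)) :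
    (∀ n : ℕ, q n * q (n + 1) = ∏ i ∈ Finset.range (n + 1), A i) ∧
    (∀ n : ℕ, q n ∣ a (n + 2)) := by
  have hq_pos := denominators_pos hq0 hq1 hq ha
  have hq_ne (n : ℕ) : (q n : ℝ) ≠ 0 := by exact_mod_cast (hq_pos n).ne'
  have hdet := convergents_det (a := fun n ↦ (a n : ℝ)) (p := fun n ↦ (p n : ℝ))
    (q := fun n ↦ (q n : ℝ)) (by simp [hp0]) (by simp [hq0]) (by simp [hp1])
    (fun n ↦ by simp [hp]) (fun n ↦ by simp [hq])
  have hprod (n : ℕ) : q n * q (n + 1) = ∏ i ∈ range (n + 1), A i := by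
    have h := eq_sub_of_sum_range_succ_eq (c := fun n ↦ (p n : ℝ) / q n) (by simp [hp0]) heq n
    rw [convergents_sub (p := fun n ↦ (p n : ℝ)) (q := fun n ↦ (q n : ℝ)) (hdet n) (hq_ne n)
      (hq_ne (n + 1)), div_eq_mul_inv, div_eq_mul_inv,
      mul_right_inj' (pow_ne_zero _ (by norm_num)), inv_inj] at h
    exact_mod_cast h.symm
  refine ⟨hprod, fun n ↦ dvd_partialQuotient_of_dvd hq0 hq ?_⟩
  rw [← Nat.mul_dvd_mul_iff_left (hq_pos (n + 1))]
  exact ⟨A (n + 1), by rw [hprod, prod_range_succ, ← hprod n, mul_comm (q n)]⟩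

/-- If the type II series `∑ (-1)^n / (A_0 A_1 ⋯ A_n)` is equivalent to a simple
continued fraction with convergents `p_n/q_n`, then `q_n q_{n+1} = A_0 A_1 ⋯ A_n`
and `q_n ∣ a_{n+2}` for all `n ≥ 0`. -/
theorem stmt_8 (A : ℕ → ℕ) (hA0 : 0 < A 0) (hA : ∀ n : ℕ, 1 ≤ n → 2 ≤ A n)
    (a p q : ℕ → ℕ) (ha : ∀ n : ℕ, 0 < a (n + 1))
    (hp0 : p 0 = 0) (hq0 : q 0 = 1) (hp1 : p 1 = 1) (hq1 : q 1 = a 1)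
    (hp : ∀ n : ℕ, p (n + 2) = a (n + 2) * p (n + 1) + p n)
    (hq : ∀ n : ℕ, q (n + 2) = a (n + 2) * q (n + 1) + q n)
    (heq : ∀ n : ℕ,
      (∑ i ∈ Finset.range (n + 1), (-1 : ℝ) ^ i / ∏ j ∈ Finset.range (i + 1), (A j : ℝ))
        = (p (n + 1) : ℝ) / (q (n + 1) : ℝ)) :
    (∀ n : ℕ, q n * q (n + 1) = ∏ i ∈ Finset.range (n + 1), A i) ∧
    (∀ n : ℕ, q n ∣ a (n + 2)) :=
  stmt_8_general A a p q ha hp0 hq0 hp1 hq1 hp hq heq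
end

section
/- The primorial constant P := Σ_{n=1}^∞ (−1)^{n−1} / (p_1 p_2 ⋯ p_n) = 1/2 − 1/6 + 1/30 − 1/210 + 1/2310 − ⋯, where p_n denotes the n-th prime and p_1 p_2 ⋯ p_n = p_n# is the primorial, is irrational. -/
/-!
Write `q_N = d_0 ⋯ d_N`, here with `d_i` the primes. If the sum `L` were `a / b`, choose `N` with
`d_{N+1} > b`. The partial sum `S` through index `N` has denominator `q_N`, and the alternating
series bound gives `|L - S| ≤ 1 / (q_N d_{N+1}) < 1 / (b q_N)`, which is below the least possible
distance between distinct fractions with denominators `b` and `q_N`; hence `L = S`. But strictly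
decreasing terms keep an alternating series away from each of its partial sums.
-/

open Finset

theorem StrictAnti.tsum_alternating_ne_sum_range {E : Type*} [Ring E] [LinearOrder E]
    [IsOrderedRing E] [UniformSpace E] [IsUniformAddGroup E] [CompleteSpace E]
    [OrderClosedTopology E] {f : ℕ → E} (hfa : StrictAnti f) (hfs : Summable f) (n : ℕ) :
    ∑' i, (-1) ^ i * f i ≠ ∑ i ∈ range n, (-1) ^ i * f i := by
  intro h
  have hbound := alternating_series_error_bound f hfa.antitone hfs (n + 1)
  rw [h, sum_range_succ, sub_add_cancel_left, abs_neg, abs_mul, abs_pow, abs_neg, abs_one,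
    one_pow, one_mul] at hbound
  exact (le_abs_self (f n)).trans hbound |>.not_gt (hfa n.lt_succ_self)

theorem Rat.cast_eq_of_abs_sub_intCast_div_lt {r : ℚ} {z : ℤ} {q : ℕ} (hq : 0 < q)
    (h : |(r : ℝ) - z / q| < 1 / (r.den * q)) : (r : ℝ) = z / q := by
  have hden : (0 : ℝ) < r.den * q := by positivity
  set m : ℤ := r.num * q - r.den * z
  have hm : (m : ℝ) = r.den * q * (r - z / q) := by
    simp only [m, Rat.cast_def]
    push_cast
    field_simp
  have hm_lt : |(m : ℝ)| < 1 := by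
    rwa [hm, abs_mul, abs_of_pos hden, ← lt_div_iff₀' hden]
  have hm0 : m = 0 := Int.abs_lt_one_iff.1 (by exact_mod_cast hm_lt)
  rw [hm0, Int.cast_zero, eq_comm, mul_eq_zero, sub_eq_zero] at hm
  exact hm.resolve_left hden.ne'

section CantorSeries

variable {d : ℕ → ℕ}

lemma strictAnti_inv_prod_range (hd : ∀ n, 2 ≤ d n) :
    StrictAnti fun n ↦ (∏ i ∈ range (n + 1), (d i : ℝ))⁻¹ := by
  refine strictAnti_nat_of_succ_lt fun n ↦ ?_
  have hpos : 0 < ∏ i ∈ range (n + 1), (d i : ℝ) :=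
    prod_pos fun i _ ↦ by exact_mod_cast (hd i).trans_lt' two_pos
  have hd' : (1 : ℝ) < d (n + 1) := by exact_mod_cast hd (n + 1)
  rw [prod_range_succ _ (n + 1)]
  exact inv_strictAnti₀ hpos (lt_mul_of_one_lt_right hpos hd')

lemma summable_inv_prod_range (hd : ∀ n, 2 ≤ d n) :
    Summable fun n ↦ (∏ i ∈ range (n + 1), (d i : ℝ))⁻¹ := by
  refine summable_geometric_two.of_nonneg_of_le (fun n ↦ by positivity) fun n ↦ ?_
  have h : 2 ^ (n + 1) ≤ ∏ i ∈ range (n + 1), d i := by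
    simpa using pow_card_le_prod (range (n + 1)) d 2 fun i _ ↦ hd i
  calc (∏ i ∈ range (n + 1), (d i : ℝ))⁻¹ ≤ ((2 : ℝ) ^ (n + 1))⁻¹ := by
        gcongr
        exact_mod_cast h
    _ ≤ (1 / 2) ^ n := by
        rw [one_div, inv_pow]
        gcongr
        · norm_num
        · omega

lemma exists_sum_range_eq_intCast_div_prod_range (hd : ∀ n, d n ≠ 0) (N : ℕ) :
    ∃ z : ℤ, ∑ n ∈ range (N + 1), (-1) ^ n * (∏ i ∈ range (n + 1), (d i : ℝ))⁻¹ =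
      z / (∏ i ∈ range (N + 1), d i : ℕ) := by
  refine ⟨∑ n ∈ range (N + 1), (-1) ^ n * ∏ i ∈ Ico (n + 1) (N + 1), (d i : ℤ), ?_⟩
  have hne (n : ℕ) : ∏ i ∈ range (n + 1), (d i : ℝ) ≠ 0 :=
    prod_ne_zero_iff.2 fun i _ ↦ Nat.cast_ne_zero.2 (hd i)
  rw [Nat.cast_prod, eq_div_iff (hne N), sum_mul]
  push_cast
  refine sum_congr rfl fun n hn ↦ ?_
  rw [← prod_range_mul_prod_Ico _ (by simpa using hn : n + 1 ≤ N + 1)]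
  field_simp [hne n]

theorem irrational_tsum_neg_one_pow_div_prod_range (hd : ∀ n, 2 ≤ d n)
    (hunb : ∀ b, ∃ n, b < d n) :
    Irrational (∑' n, (-1 : ℝ) ^ n / ∏ i ∈ range (n + 1), (d i : ℝ)) := by
  have hd_pos (n : ℕ) : 0 < d n := (hd n).trans_lt' two_pos
  simp_rw [div_eq_mul_inv]
  rintro ⟨r, hr⟩
  obtain ⟨N, hN⟩ : ∃ N, r.den < d (N + 1) := by
    obtain ⟨n, hn⟩ := hunb (max r.den (d 0))
    obtain ⟨N, rfl⟩ := Nat.exists_eq_add_one_of_ne_zero (n := n) (by rintro rfl; omega)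
    exact ⟨N, by omega⟩
  obtain ⟨z, hz⟩ := exists_sum_range_eq_intCast_div_prod_range (fun n ↦ (hd_pos n).ne') N
  set q := ∏ i ∈ range (N + 1), d i
  have hq : 0 < q := prod_pos fun i _ ↦ hd_pos i
  have hanti := strictAnti_inv_prod_range hd
  have hsum := summable_inv_prod_range hd
  have herr := alternating_series_error_bound _ hanti.antitone hsum (N + 1)
  rw [← hr, hz, prod_range_succ _ (N + 1), ← Nat.cast_prod] at herr
  refine hanti.tsum_alternating_ne_sum_range hsum (N + 1) ?_
  rw [← hr, hz]
  refine Rat.cast_eq_of_abs_sub_intCast_div_lt hq ?_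
  calc |(r : ℝ) - z / q| ≤ ((q : ℝ) * d (N + 1))⁻¹ := herr
    _ < 1 / (r.den * q) := by
      rw [one_div, mul_comm (r.den : ℝ)]
      gcongr

end CantorSeries

/-- The primorial constant `P = ∑_{n≥1} (-1)^(n-1) / (p_1 p_2 ⋯ p_n)` is irrational,
where `p_i` is the `i`-th prime (here `Nat.nth Nat.Prime i` is the `(i+1)`-st prime). -/
theorem stmt_9 :
    Irrational (∑' n : ℕ, (-1 : ℝ) ^ n / ∏ i ∈ Finset.range (n + 1), (Nat.nth Nat.Prime i : ℝ)) :=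
  irrational_tsum_neg_one_pow_div_prod_range (fun n ↦ (Nat.prime_nth_prime n).two_le)
    fun b ↦ ⟨b, (Nat.add_two_le_nth_prime b).trans_lt' (by omega)⟩
end

section
/- Let (f_n)_{n≥0} = 1, 1, 2, 3, 5, 8, 13, … be the Fibonacci numbers defined by f_0 = 1, f_1 = 1, and f_{n+1} = f_n + f_{n−1} for n ≥ 1. Then Σ_{n=0}^∞ (−1)^n / (f_n f_{n+1}) = (√5 − 1)/2, the reciprocal of the golden ratio φ = (1 + √5)/2. -/
/-!
With `F = Nat.fib` we have `f n = F (n + 1)`. By Cassini's identity the `n`-th term equals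
`r (n + 1) - r n` for `r n = F n / F (n + 1)`, so the partial sums telescope to `r n`. The identity
`ψ F (n + 1) + F n = ψ ^ (n + 1)` gives `r n = -ψ + ψ ^ (n + 1) / F (n + 1) → -ψ = φ⁻¹`.
Since `tsum` is `0` on non-summable families, absolute convergence is also needed; it follows
from `φ ^ n ≤ F (n + 2)`.
-/

open Filter Topology Real goldenRatio

theorem eq_fib_add_one {f : ℕ → ℕ} (h0 : f 0 = 1) (h1 : f 1 = 1)
    (h : ∀ n, f (n + 2) = f (n + 1) + f n) (n : ℕ) : f n = Nat.fib (n + 1) := by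
  induction n using Nat.twoStepInduction with
  | zero => simp [h0]
  | one => simp [h1]
  | more n ih0 ih1 => rw [h, ih0, ih1, Nat.fib_add_two (n := n + 1), add_comm]

theorem one_le_fib_add_one (n : ℕ) : (1 : ℝ) ≤ Nat.fib (n + 1) :=
  Nat.one_le_cast.2 (Nat.fib_pos.2 n.succ_pos)

theorem fib_add_one_sq_sub_fib_mul_fib_add_two {R : Type*} [CommRing R] (n : ℕ) :
    (Nat.fib (n + 1) : R) ^ 2 - Nat.fib n * Nat.fib (n + 2) = (-1) ^ n := by
  have h := Int.fib_succ_mul_fib_pred_sub_fib_sq (n + 1 : ℕ)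
  rw [show ((n + 1 : ℕ) : ℤ) + 1 = (n + 2 : ℕ) by push_cast; ring,
    show ((n + 1 : ℕ) : ℤ) - 1 = n by push_cast; ring, Int.natAbs_natCast,
    Int.fib_natCast, Int.fib_natCast, Int.fib_natCast] at h
  have hR := congrArg (Int.cast : ℤ → R) h
  push_cast at hR
  linear_combination -hR

theorem goldenRatio_pow_le_fib_add_two (n : ℕ) : φ ^ n ≤ Nat.fib (n + 2) := by
  have h := goldenRatio_mul_fib_succ_add_fib (n + 1)
  have hmono : (Nat.fib (n + 1) : ℝ) ≤ Nat.fib (n + 2) := by exact_mod_cast Nat.fib_le_fib_succ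
  have hmul : φ ^ 2 * φ ^ n ≤ φ ^ 2 * Nat.fib (n + 2) := by
    rw [← pow_add, add_comm, goldenRatio_sq, ← h]
    nlinarith [goldenRatio_pos]
  exact le_of_mul_le_mul_left hmul (by positivity)

theorem summable_inv_fib_add_two : Summable fun n ↦ (Nat.fib (n + 2) : ℝ)⁻¹ := by
  have hgeom := summable_geometric_of_lt_one (inv_nonneg.2 goldenRatio_pos.le)
    (inv_lt_one_of_one_lt₀ one_lt_goldenRatio)
  refine hgeom.of_nonneg_of_le (fun n ↦ by positivity) fun n ↦ ?_
  rw [inv_pow]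
  exact inv_anti₀ (by positivity) (goldenRatio_pow_le_fib_add_two n)

noncomputable def fibRatio (n : ℕ) : ℝ := Nat.fib n / Nat.fib (n + 1)

theorem fibRatio_succ_sub (n : ℕ) :
    fibRatio (n + 1) - fibRatio n = (-1) ^ n / (Nat.fib (n + 1) * Nat.fib (n + 2)) := by
  have h1 := one_le_fib_add_one n
  have h2 := one_le_fib_add_one (n + 1)
  rw [fibRatio, fibRatio, ← fib_add_one_sq_sub_fib_mul_fib_add_two]
  field_simp

theorem tendsto_fibRatio : Tendsto fibRatio atTop (𝓝 φ⁻¹) := by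
  have h : fibRatio = fun n ↦ -ψ + ψ ^ (n + 1) / Nat.fib (n + 1) := by
    ext n
    have := one_le_fib_add_one n
    rw [fibRatio, ← goldenConj_mul_fib_succ_add_fib]
    field_simp
    ring
  have hψ : |ψ| < 1 := abs_lt.2 ⟨neg_one_lt_goldenConj, goldenConj_neg.trans one_pos⟩
  have hzero : Tendsto (fun n : ℕ ↦ ψ ^ (n + 1) / Nat.fib (n + 1)) atTop (𝓝 0) := by
    have hpow := (tendsto_pow_atTop_nhds_zero_of_abs_lt_one (r := |ψ|) (by rwa [abs_abs])).comp
      (tendsto_add_atTop_nat 1)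
    refine squeeze_zero_norm (fun n ↦ ?_) hpow
    rw [norm_div, norm_pow, Real.norm_eq_abs, Real.norm_natCast]
    exact div_le_self (by positivity) (one_le_fib_add_one n)
  rw [h, inv_goldenRatio]
  simpa using tendsto_const_nhds.add hzero

theorem hasSum_neg_one_pow_div_fib_mul_fib :
    HasSum (fun n ↦ (-1 : ℝ) ^ n / (Nat.fib (n + 1) * Nat.fib (n + 2))) φ⁻¹ := by
  have hsum : Summable fun n ↦ (-1 : ℝ) ^ n / (Nat.fib (n + 1) * Nat.fib (n + 2)) := by
    refine summable_inv_fib_add_two.of_norm_bounded fun n ↦ ?_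
    rw [norm_div, norm_pow, norm_neg, norm_one, one_pow, norm_mul, Real.norm_natCast,
      Real.norm_natCast, one_div]
    exact inv_anti₀ (zero_lt_one.trans_le (one_le_fib_add_one (n + 1)))
      (le_mul_of_one_le_left (by positivity) (one_le_fib_add_one n))
  rw [hsum.hasSum_iff_tendsto_nat]
  simp_rw [← fibRatio_succ_sub, Finset.sum_range_sub]
  rw [show fibRatio 0 = 0 by simp [fibRatio]]
  simpa only [sub_zero] using tendsto_fibRatio

/-- For the Fibonacci numbers `f_0 = f_1 = 1`, `f_{n+1} = f_n + f_{n-1}`, the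
alternating sum of reciprocal golden rectangle numbers equals `1/φ = (√5 - 1)/2`. -/
theorem stmt_10 (f : ℕ → ℕ) (hf0 : f 0 = 1) (hf1 : f 1 = 1)
    (hf : ∀ n : ℕ, f (n + 2) = f (n + 1) + f n) :
    (∑' n : ℕ, (-1 : ℝ) ^ n / ((f n : ℝ) * (f (n + 1) : ℝ))) = (Real.sqrt 5 - 1) / 2 := by
  simp_rw [eq_fib_add_one hf0 hf1 hf, hasSum_neg_one_pow_div_fib_mul_fib.tsum_eq, inv_goldenRatio]
  ring
end

section
/- Let (M_n)_{n≥0} be any sequence of positive integers. Define (N_n)_{n≥1} by N_1 = 1, N_2 = M_0, and N_{n+2} = (M_n N_{n+1} + 1) N_n for n ≥ 1, and define (A_n)_{n≥0} by A_0 = M_0 and A_n = M_n N_{n+1} + 1 for n ≥ 1. Then the alternating series Σ_{n=0}^∞ (−1)^n / (A_0 A_1 ⋯ A_n) is equivalent to the simple continued fraction [0; M_0, M_1 N_1, M_2 N_2, M_3 N_3, …]; that is, with partial quotients a_1 = M_0 and a_{n+1} = M_n N_n for n ≥ 1, and convergents p_n/q_n defined by p_0 = 0, q_0 = 1, p_1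 = 1, q_1 = a_1, p_{n+1} = a_{n+1} p_n + p_{n-1}, q_{n+1} = a_{n+1} q_n + q_{n-1}, one has Σ_{i=0}^{n} (−1)^i / (A_0 A_1 ⋯ A_i) = p_{n+1}/q_{n+1} for all n ≥ 0. Moreover A_{n+1} > A_n for all n ≥ 0, so the series is the Pierce expansion of its sum. -/
/-!
The denominators of the continued fraction are `q n = N (n + 1)`, and the recurrences for `N`
and `A` turn `q (n + 2) = a (n + 2) * q (n + 1) + q n` into `q (n + 2) = A (n + 1) * q n`.
Hence `A 0 ⋯ A n = q n * q (n + 1)`, and the classical identity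
`p (n + 1) / q (n + 1) - p n / q n = (-1) ^ n / (q n * q (n + 1))` telescopes to the partial
sums of the series. Monotonicity: `A n ≤ q (n + 1) < M (n + 1) * q (n + 1) + 1 = A (n + 1)`.
-/

open Finset

theorem continuant_cross_sub {R : Type*} [CommRing R] {a p q : ℕ → R}
    (hp : ∀ n, p (n + 2) = a (n + 2) * p (n + 1) + p n)
    (hq : ∀ n, q (n + 2) = a (n + 2) * q (n + 1) + q n) (n : ℕ) :
    p (n + 1) * q n - p n * q (n + 1) = (-1) ^ n * (p 1 * q 0 - p 0 * q 1) := by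
  induction n with
  | zero => ring
  | succ n ih =>
    rw [hp, hq, pow_succ]
    linear_combination (-1 : R) * ih

theorem div_eq_add_sum_of_cross_sub {K : Type*} [Field K] {p q : ℕ → K} (hq : ∀ n, q n ≠ 0)
    (hcross : ∀ n, p (n + 1) * q n - p n * q (n + 1) = (-1) ^ n) (n : ℕ) :
    p n / q n = p 0 / q 0 + ∑ i ∈ range n, (-1) ^ i / (q i * q (i + 1)) := by
  have hstep : ∀ i, (-1) ^ i / (q i * q (i + 1)) = p (i + 1) / q (i + 1) - p i / q i := by
    intro i
    rw [← hcross i]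
    field_simp [hq i, hq (i + 1)]
  simp_rw [hstep, sum_range_sub (fun i => p i / q i)]
  ring

theorem continuant_pos {a q : ℕ → ℕ} (h0 : 0 < q 0) (h1 : 0 < q 1)
    (hq : ∀ n, q (n + 2) = a (n + 2) * q (n + 1) + q n) (n : ℕ) : 0 < q n := by
  induction n using Nat.twoStepInduction with
  | zero => exact h0
  | one => exact h1
  | more n ih _ => rw [hq]; omega

theorem prod_range_succ_eq_mul_of_step {M : Type*} [CommMonoid M] {A q : ℕ → M}
    (h0 : A 0 = q 0 * q 1) (hstep : ∀ n, q (n + 2) = A (n + 1) * q n) (n : ℕ) :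
    ∏ j ∈ range (n + 1), A j = q n * q (n + 1) := by
  induction n with
  | zero => simpa using h0
  | succ n ih =>
    rw [prod_range_succ, ih, hstep]
    ac_rfl

/-- The three-step construction: given positive integers `M_n`, define `N` and `A` as in
Corollary (i). Then the series `∑ (-1)^n / (A_0 ⋯ A_n)` is equivalent to the simple
continued fraction `[0; M_0, M_1 N_1, M_2 N_2, …]`, and `A` is strictly increasing. -/
theorem stmt_11 (M N A a p q : ℕ → ℕ)
    (hM : ∀ n : ℕ, 0 < M n)
    (hN1 : N 1 = 1) (hN2 : N 2 = M 0)
    (hN : ∀ n : ℕ, 1 ≤ n → N (n + 2) = (M n * N (n + 1) + 1) * N n)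
    (hA0 : A 0 = M 0) (hA : ∀ n : ℕ, 1 ≤ n → A n = M n * N (n + 1) + 1)
    (ha1 : a 1 = M 0) (ha : ∀ n : ℕ, 1 ≤ n → a (n + 1) = M n * N n)
    (hp0 : p 0 = 0) (hq0 : q 0 = 1) (hp1 : p 1 = 1) (hq1 : q 1 = a 1)
    (hp : ∀ n : ℕ, p (n + 2) = a (n + 2) * p (n + 1) + p n)
    (hq : ∀ n : ℕ, q (n + 2) = a (n + 2) * q (n + 1) + q n) :
    (∀ n : ℕ,
      (∑ i ∈ Finset.range (n + 1), (-1 : ℝ) ^ i / ∏ j ∈ Finset.range (i + 1), (A j : ℝ))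
        = (p (n + 1) : ℝ) / (q (n + 1) : ℝ)) ∧
    (∀ n : ℕ, A n < A (n + 1)) := by
  have hqN : ∀ n, q n = N (n + 1) := by
    intro n
    induction n using Nat.twoStepInduction with
    | zero => rw [hq0, hN1]
    | one => rw [hq1, ha1, hN2]
    | more n ih₀ ih₁ =>
      rw [hq, ha (n + 1) (by omega), hN (n + 1) (by omega), ih₀, ih₁]
      ring
  have hqpos : ∀ n, 0 < q n := continuant_pos (by rw [hq0]; exact one_pos)
    (by rw [hq1, ha1]; exact hM 0) hq
  have hqA : ∀ n, q (n + 2) = A (n + 1) * q n := fun n => by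
    rw [hq, ha (n + 1) (by omega), hA (n + 1) (by omega), hqN, hqN]
    ring
  have hAq : ∀ n, A n ≤ q (n + 1) := fun n => by
    cases n with
    | zero => rw [hA0, hq1, ha1]
    | succ n => rw [hqA]; exact Nat.le_mul_of_pos_right _ (hqpos n)
  refine ⟨fun n => ?_, fun n => ?_⟩
  · have hcross (k : ℕ) : (p (k + 1) : ℝ) * q k - p k * q (k + 1) = (-1) ^ k := by
      rw [continuant_cross_sub (a := fun n => (a n : ℝ)) (p := fun n => (p n : ℝ))
        (q := fun n => (q n : ℝ)) (by exact_mod_cast hp) (by exact_mod_cast hq), hp0, hq0, hp1]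
      simp
    have hprod := prod_range_succ_eq_mul_of_step (A := fun j => (A j : ℝ))
      (q := fun j => (q j : ℝ)) (by simp [hA0, hq0, hq1, ha1]) (by exact_mod_cast hqA)
    have hconv := div_eq_add_sum_of_cross_sub (p := fun n => (p n : ℝ)) (q := fun n => (q n : ℝ))
      (fun n => by exact_mod_cast (hqpos n).ne') hcross (n + 1)
    simp only [hprod, hconv, hp0, Nat.cast_zero, zero_div, zero_add]
  · calc A n ≤ q (n + 1) := hAq n
      _ < M (n + 1) * q (n + 1) + 1 := by nlinarith [hM (n + 1)]
      _ = A (n + 1) := by rw [hA (n + 1) (by omega), hqN]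
end

section
/- Fix positive integers k and ℓ, and define s_0 = k and s_n = (s_0 s_1 ⋯ s_{n−1})^ℓ + 1 for n ≥ 1. Set a_1 = s_0^ℓ and a_{n+1} = (s_n^ℓ − 1) · Π_{i=0}^{n−1} (s_i^ℓ)^{(−1)^{n+i}} for n ≥ 1. Then each a_n is a positive integer, and the series C_{k,ℓ} := Σ_{n=0}^∞ (−1)^n / (s_{n+1} − 1) is equivalent to the simple continued fraction [0; a_1, a_2, a_3, …]; that is, with convergents p_n/q_n defined by p_0 = 0, q_0 = 1, p_1 = 1, q_1 = a_1, p_{n+1} = a_{n+1} p_n + p_{n-1}, q_{n+1} = a_{n+1} q_n + q_{n-1}, one has Σ_{i=0}^{n} (−1)^i / (s_{i+1} − 1) = p_{n+1}/q_{n+1} for all n ≥ 0. -/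
/-!
The convergent denominators are `q_n = ∏_{i ≤ n, i ≡ n (mod 2)} s_i^ℓ`. Indeed
`q_n q_{n+1} = (s_0 ⋯ s_n)^ℓ = s_{n+1} - 1`, the alternating product in `a_{n+1}` equals
`q_{n-1} / q_n`, and hence `a_{n+1} q_n + q_{n-1} = s_n^ℓ q_{n-1} = q_{n+1}`. Euler's determinant
identity `p_{n+1} q_n - p_n q_{n+1} = (-1)^n` makes `p_{n+1} / q_{n+1}` the telescoping sum
`∑_{i ≤ n} (-1)^i / (q_i q_{i+1})`, which is the partial sum of the series. Finally
`a_{n+1} = (s_n^ℓ - 1) / (s_n - 1) · q_{n-1}^2` is a positive integer.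
-/

open Finset

theorem contFrac_determinant {K : Type*} [CommRing K] {a p q : ℕ → K}
    (hp0 : p 0 = 0) (hq0 : q 0 = 1) (hp1 : p 1 = 1)
    (hp : ∀ n, p (n + 2) = a (n + 2) * p (n + 1) + p n)
    (hq : ∀ n, q (n + 2) = a (n + 2) * q (n + 1) + q n) (n : ℕ) :
    p (n + 1) * q n - p n * q (n + 1) = (-1) ^ n := by
  induction n with
  | zero => simp [hp0, hq0, hp1]
  | succ n ih => rw [hp, hq, pow_succ, ← ih]; ring

theorem contFrac_convergent_eq_sum {K : Type*} [Field K] {a p q : ℕ → K}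
    (hp0 : p 0 = 0) (hq0 : q 0 = 1) (hp1 : p 1 = 1)
    (hp : ∀ n, p (n + 2) = a (n + 2) * p (n + 1) + p n)
    (hq : ∀ n, q (n + 2) = a (n + 2) * q (n + 1) + q n) (hq_ne : ∀ n, q n ≠ 0) (n : ℕ) :
    p (n + 1) / q (n + 1) = ∑ i ∈ range (n + 1), (-1) ^ i / (q i * q (i + 1)) := by
  induction n with
  | zero => simp [hp1, hq0]
  | succ n ih =>
    have hdet := contFrac_determinant hp0 hq0 hp1 hp hq (n + 1)
    rw [sum_range_succ, ← ih, ← hdet]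
    field_simp [hq_ne]
    ring

namespace SylvesterCF

/-- `denom s l n = ∏ (s i)^l` over `i ≤ n` with `i ≡ n [MOD 2]`. -/
def denom (s : ℕ → ℕ) (l : ℕ) : ℕ → ℕ
  | 0 => 1
  | 1 => s 0 ^ l
  | n + 2 => s (n + 1) ^ l * denom s l n

variable {s : ℕ → ℕ} {l : ℕ}

theorem denom_pos (hs : ∀ n, 0 < s n) : ∀ n, 0 < denom s l n
  | 0 => Nat.one_pos
  | 1 => pow_pos (hs 0) l
  | n + 2 => Nat.mul_pos (pow_pos (hs _) l) (denom_pos hs n)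

theorem denom_mul_denom_succ (n : ℕ) :
    denom s l n * denom s l (n + 1) = (∏ i ∈ range (n + 1), s i) ^ l := by
  induction n with
  | zero => simp [denom]
  | succ n ih => rw [prod_range_succ, mul_pow, ← ih, denom]; ring

theorem prod_zpow_neg_one_pow_eq_denom_div (hs : ∀ n, 0 < s n) (n : ℕ) :
    ∏ i ∈ range (n + 1), ((s i : ℝ) ^ l) ^ ((-1 : ℤ) ^ (n + 1 + i))
      = (denom s l n : ℝ) / denom s l (n + 1) := by
  induction n with
  | zero => simp [denom]
  | succ n ih =>
    have hflip : ∀ i, (-1 : ℤ) ^ (n + 1 + 1 + i) = -(-1) ^ (n + 1 + i) := fun i => by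
      rw [show n + 1 + 1 + i = n + 1 + i + 1 by ring, pow_succ, mul_neg_one]
    have hs' : (s (n + 1) : ℝ) ≠ 0 := by exact_mod_cast (hs _).ne'
    have hexp : (-1 : ℤ) ^ (n + 1 + (n + 1)) = 1 := Even.neg_one_pow ⟨n + 1, rfl⟩
    simp_rw [prod_range_succ _ (n + 1), hflip, zpow_neg, prod_inv_distrib, ih, hexp, zpow_one]
    rw [denom]
    push_cast
    field_simp

theorem denom_add_two_eq (hs : ∀ n, 0 < s n) (n : ℕ) :
    (denom s l (n + 2) : ℝ)
      = ((s (n + 1) : ℝ) ^ l - 1) * (denom s l n / denom s l (n + 1)) * denom s l (n + 1)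
        + denom s l n := by
  have hQ : (denom s l (n + 1) : ℝ) ≠ 0 := by exact_mod_cast (denom_pos hs _).ne'
  rw [denom]
  push_cast
  field_simp
  ring

section Sylvester

variable (hs : ∀ n, s (n + 1) = (∏ i ∈ range (n + 1), s i) ^ l + 1)
include hs

theorem succ_eq_denom_mul_add_one (n : ℕ) : s (n + 1) = denom s l n * denom s l (n + 1) + 1 := by
  rw [hs, denom_mul_denom_succ]

theorem partialQuotient_eq_natCast (hpos : ∀ n, 0 < s n) (n : ℕ) :
    ((s (n + 1) : ℝ) ^ l - 1) * (denom s l n / denom s l (n + 1))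
      = ((∑ i ∈ range l, s (n + 1) ^ i) * denom s l n ^ 2 : ℕ) := by
  have hQ : (denom s l (n + 1) : ℝ) ≠ 0 := by exact_mod_cast (denom_pos hpos _).ne'
  rw [← geom_sum_mul, succ_eq_denom_mul_add_one hs]
  push_cast
  field_simp
  ring

end Sylvester

end SylvesterCF

open SylvesterCF in
/-- For the Sylvester-type sequence `s_0 = k`, `s_n = (s_0 ⋯ s_{n-1})^ℓ + 1`, the
partial quotients `a_1 = s_0^ℓ`, `a_{n+1} = (s_n^ℓ - 1) ∏_{i<n} (s_i^ℓ)^((-1)^(n+i))`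
are positive integers, and the series `C_{k,ℓ} = ∑ (-1)^n / (s_{n+1} - 1)` is
equivalent to the simple continued fraction `[0; a_1, a_2, …]`. -/
theorem stmt_14 (k l : ℕ) (hk : 0 < k) (hl : 0 < l)
    (s : ℕ → ℕ) (hs0 : s 0 = k)
    (hs : ∀ n : ℕ, s (n + 1) = (∏ i ∈ Finset.range (n + 1), s i) ^ l + 1)
    (a : ℕ → ℝ)
    (ha1 : a 1 = (s 0 : ℝ) ^ l)
    (ha : ∀ n : ℕ, 1 ≤ n →
      a (n + 1) = ((s n : ℝ) ^ l - 1)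
        * ∏ i ∈ Finset.range n, ((s i : ℝ) ^ l) ^ ((-1 : ℤ) ^ (n + i)))
    (p q : ℕ → ℝ)
    (hp0 : p 0 = 0) (hq0 : q 0 = 1) (hp1 : p 1 = 1) (hq1 : q 1 = a 1)
    (hp : ∀ n : ℕ, p (n + 2) = a (n + 2) * p (n + 1) + p n)
    (hq : ∀ n : ℕ, q (n + 2) = a (n + 2) * q (n + 1) + q n) :
    (∀ n : ℕ, 1 ≤ n → ∃ m : ℕ, 0 < m ∧ a n = (m : ℝ)) ∧
    (∀ n : ℕ,
      (∑ i ∈ Finset.range (n + 1), (-1 : ℝ) ^ i / ((s (i + 1) : ℝ) - 1))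
        = p (n + 1) / q (n + 1)) := by
  have hpos : ∀ n, 0 < s n
    | 0 => hs0 ▸ hk
    | n + 1 => by rw [hs]; omega
  have ha' (n : ℕ) : a (n + 2) = ((s (n + 1) : ℝ) ^ l - 1) * (denom s l n / denom s l (n + 1)) := by
    rw [ha (n + 1) n.succ_pos, prod_zpow_neg_one_pow_eq_denom_div hpos]
  have hqQ : ∀ n, q n = denom s l n := by
    refine Nat.twoStepInduction ?_ ?_ fun n h0 h1 => ?_
    · simp [hq0, denom]
    · simp [hq1, ha1, denom]
    · rw [hq, ha', h0, h1, denom_add_two_eq hpos]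
  refine ⟨fun n hn => ?_, fun n => ?_⟩
  · match n, hn with
    | 1, _ => exact ⟨k ^ l, pow_pos hk l, by rw [ha1, hs0]; push_cast; rfl⟩
    | m + 2, _ =>
      refine ⟨_, Nat.mul_pos ?_ (pow_pos (denom_pos hpos m) 2),
        (ha' m).trans (partialQuotient_eq_natCast hs hpos m)⟩
      exact sum_pos (fun i _ => pow_pos (hpos _) i) ⟨0, mem_range.mpr hl⟩
  · have hq_ne (n : ℕ) : q n ≠ 0 := by rw [hqQ]; exact_mod_cast (denom_pos hpos n).ne'
    rw [contFrac_convergent_eq_sum hp0 hq0 hp1 hp hq hq_ne]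
    refine sum_congr rfl fun i _ => ?_
    rw [hqQ, hqQ, succ_eq_denom_mul_add_one hs]
    push_cast
    ring
end

section
/- For positive integers k and ℓ, with s_0 = k and s_n = (s_0 s_1 ⋯ s_{n−1})^ℓ + 1 for n ≥ 1, define the partial quotients a_1 = s_0^ℓ and a_{n+1} = (s_n^ℓ − 1) · Π_{i=0}^{n−1} (s_i^ℓ)^{(−1)^{n+i}} for n ≥ 1. Then the double-exponential lower bound a_n > (k^ℓ + 1)^{(ℓ+1)^{n−4}} holds for all n ≥ 4. -/
/-!
Write `x_i = s_i^ℓ`. Since `s_n - 1 = x_0 ⋯ x_{n-1}`, multiplying the alternating product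
`∏_{i<n} x_i^{±1}` in `a_{n+1}` by `s_n^ℓ - 1 ≥ s_n - 1` cancels every factor with exponent `-1`
and squares every factor with exponent `+1`, so `a_{n+1} ≥ x_{n-2}^2 = s_{n-2}^{2ℓ}`.
On the other hand `s_{n+1} = (s_n - 1) s_n^ℓ + 1` gives `s_1^{(ℓ+1)^m} < s_{m+2}` by induction,
and `s_1 = k^ℓ + 1`.
-/

open Finset

theorem Finset.sq_le_prod_zpow_mul_prod {ι : Type*} [DecidableEq ι] {S : Finset ι} {x : ι → ℝ} {ε : ι → ℤ}
    (hx : ∀ i ∈ S, 1 ≤ x i) (hε : ∀ i ∈ S, ε i = 1 ∨ ε i = -1) {j : ι} (hj : j ∈ S)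
    (hεj : ε j = 1) :
    x j ^ 2 ≤ (∏ i ∈ S, x i ^ ε i) * ∏ i ∈ S, x i := by
  rw [← prod_mul_distrib, ← mul_prod_erase S _ hj, hεj, zpow_one, ← sq]
  refine le_mul_of_one_le_right (sq_nonneg _) (one_le_prod fun i hi => ?_)
  have hxi := hx i (mem_of_mem_erase hi)
  rcases hε i (mem_of_mem_erase hi) with h | h
  · rw [h, zpow_one]
    exact one_le_mul_of_one_le_of_one_le hxi hxi
  · rw [h, zpow_neg_one, inv_mul_cancel₀ (by positivity)]

def IsSylvesterSeq (l : ℕ) (s : ℕ → ℕ) : Prop :=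
  ∀ n, s (n + 1) = (∏ i ∈ range (n + 1), s i) ^ l + 1

namespace IsSylvesterSeq

variable {l : ℕ} {s : ℕ → ℕ}

theorem one_le (hs : IsSylvesterSeq l s) (h0 : 0 < s 0) (n : ℕ) : 1 ≤ s n := by
  cases n with
  | zero => exact h0
  | succ n => rw [hs n]; exact Nat.le_add_left 1 _

theorem succ_succ (hs : IsSylvesterSeq l s) (n : ℕ) :
    s (n + 2) = (s (n + 1) - 1) * s (n + 1) ^ l + 1 := by
  rw [hs (n + 1), prod_range_succ, mul_pow, hs n, Nat.add_sub_cancel]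

theorem cast_sub_one (hs : IsSylvesterSeq l s) (n : ℕ) :
    (s (n + 1) : ℝ) - 1 = ∏ i ∈ range (n + 1), (s i : ℝ) ^ l := by
  rw [hs n]
  push_cast
  rw [prod_pow]
  ring

theorem pow_lt (hs : IsSylvesterSeq l s) (hl : 0 < l) (h1 : 2 ≤ s 1) (m : ℕ) :
    s 1 ^ ((l + 1) ^ m) < s (m + 2) := by
  induction m with
  | zero =>
    calc s 1 ^ ((l + 1) ^ 0) = s 1 := by rw [pow_zero, pow_one]
      _ ≤ s 1 ^ l := Nat.le_self_pow hl.ne' _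
      _ ≤ (s 1 - 1) * s 1 ^ l := Nat.le_mul_of_pos_left _ (by omega)
      _ < s 2 := by rw [hs.succ_succ 0]; exact Nat.lt_succ_self _
  | succ m ih =>
    calc s 1 ^ ((l + 1) ^ (m + 1)) = s 1 ^ ((l + 1) ^ m) * (s 1 ^ ((l + 1) ^ m)) ^ l := by
          rw [pow_succ, pow_mul, pow_succ, mul_comm]
      _ ≤ (s (m + 2) - 1) * s (m + 2) ^ l :=
          Nat.mul_le_mul (by omega) (Nat.pow_le_pow_left ih.le l)
      _ < s (m + 3) := by rw [hs.succ_succ (m + 1)]; exact Nat.lt_succ_self _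

theorem pow_lt_pow_two_mul (hs : IsSylvesterSeq l s) (hl : 0 < l) (h1 : 2 ≤ s 1) (m : ℕ) :
    s 1 ^ ((l + 1) ^ m) < s (m + 1) ^ (2 * l) := by
  cases m with
  | zero => simpa using Nat.pow_lt_pow_right h1 (by omega : 1 < 2 * l)
  | succ m =>
    have hlt := hs.pow_lt hl h1 m
    calc s 1 ^ ((l + 1) ^ (m + 1)) = (s 1 ^ ((l + 1) ^ m)) ^ (l + 1) := by
          rw [pow_succ, pow_mul]
      _ < s (m + 2) ^ (l + 1) := Nat.pow_lt_pow_left hlt (by omega)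
      _ ≤ s (m + 2) ^ (2 * l) := Nat.pow_le_pow_right (Nat.zero_lt_of_lt hlt) (by omega)

theorem pow_two_mul_le_mul_prod (hs : IsSylvesterSeq l s) (hl : 0 < l) (h0 : 0 < s 0)
    {n j : ℕ} (hjn : j < n) (heven : Even (n + j)) :
    (s j : ℝ) ^ (2 * l) ≤
      ((s n : ℝ) ^ l - 1) * ∏ i ∈ range n, ((s i : ℝ) ^ l) ^ ((-1 : ℤ) ^ (n + i)) := by
  obtain ⟨p, rfl⟩ : ∃ p, n = p + 1 := ⟨n - 1, by omega⟩
  have hx : ∀ i, (1 : ℝ) ≤ (s i : ℝ) ^ l := fun i =>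
    one_le_pow₀ (by exact_mod_cast hs.one_le h0 i)
  have hsub : (s (p + 1) : ℝ) - 1 ≤ (s (p + 1) : ℝ) ^ l - 1 := by
    gcongr
    exact le_self_pow₀ (by exact_mod_cast hs.one_le h0 _) hl.ne'
  calc (s j : ℝ) ^ (2 * l) = ((s j : ℝ) ^ l) ^ 2 := by rw [← pow_mul, mul_comm]
    _ ≤ (∏ i ∈ range (p + 1), ((s i : ℝ) ^ l) ^ ((-1 : ℤ) ^ (p + 1 + i))) *
          ∏ i ∈ range (p + 1), (s i : ℝ) ^ l :=
        sq_le_prod_zpow_mul_prod (fun i _ => hx i) (fun i _ => neg_one_pow_eq_or ℤ _)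
          (mem_range.mpr hjn) heven.neg_one_pow
    _ ≤ _ := by
        rw [← hs.cast_sub_one, mul_comm]
        exact mul_le_mul_of_nonneg_right hsub (prod_nonneg fun i _ => by positivity)

end IsSylvesterSeq

theorem stmt_16_general (k l : ℕ) (hk : 0 < k) (hl : 0 < l)
    (s : ℕ → ℕ) (hs0 : s 0 = k)
    (hs : ∀ n : ℕ, s (n + 1) = (∏ i ∈ Finset.range (n + 1), s i) ^ l + 1)
    (a : ℕ → ℝ)
    (ha : ∀ n : ℕ, 1 ≤ n →
      a (n + 1) = ((s n : ℝ) ^ l - 1)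
        * ∏ i ∈ Finset.range n, ((s i : ℝ) ^ l) ^ ((-1 : ℤ) ^ (n + i))) :
    ∀ n : ℕ, 4 ≤ n → ((k : ℝ) ^ l + 1) ^ ((l + 1) ^ (n - 4)) < a n := by
  intro n hn
  obtain ⟨m, rfl⟩ : ∃ m, n = m + 4 := ⟨n - 4, by omega⟩
  have hseq : IsSylvesterSeq l s := hs
  have hs1 : s 1 = k ^ l + 1 := by simpa [hs0] using hs 0
  have h1 : 2 ≤ s 1 := by have := Nat.one_le_pow l k hk; omega
  have hquot := hseq.pow_two_mul_le_mul_prod hl (hs0 ▸ hk) (n := m + 3) (j := m + 1)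
    (by omega) ⟨m + 2, by ring⟩
  rw [← ha (m + 3) (by omega)] at hquot
  calc ((k : ℝ) ^ l + 1) ^ ((l + 1) ^ (m + 4 - 4)) = ((s 1 ^ ((l + 1) ^ m) : ℕ) : ℝ) := by
        simp [hs1]
    _ < ((s (m + 1) ^ (2 * l) : ℕ) : ℝ) := by exact_mod_cast hseq.pow_lt_pow_two_mul hl h1 m
    _ ≤ a (m + 4) := by push_cast; exact hquot

/-- Double-exponential lower bound for the partial quotients of the simple continued
fraction of `C_{k,ℓ}`: `a_n > (k^ℓ + 1)^((ℓ+1)^(n-4))` for all `n ≥ 4`. -/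
theorem stmt_16 (k l : ℕ) (hk : 0 < k) (hl : 0 < l)
    (s : ℕ → ℕ) (hs0 : s 0 = k)
    (hs : ∀ n : ℕ, s (n + 1) = (∏ i ∈ Finset.range (n + 1), s i) ^ l + 1)
    (a : ℕ → ℝ)
    (ha1 : a 1 = (s 0 : ℝ) ^ l)
    (ha : ∀ n : ℕ, 1 ≤ n →
      a (n + 1) = ((s n : ℝ) ^ l - 1)
        * ∏ i ∈ Finset.range n, ((s i : ℝ) ^ l) ^ ((-1 : ℤ) ^ (n + i))) :
    ∀ n : ℕ, 4 ≤ n → ((k : ℝ) ^ l + 1) ^ ((l + 1) ^ (n - 4)) < a n :=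
  stmt_16_general k l hk hl s hs0 hs a ha
end

section
/- For positive integers k and ℓ, with s_0 = k and s_n = (s_0 s_1 ⋯ s_{n−1})^ℓ + 1 for n ≥ 1, the Kellogg–Curtiss-type constant K_{k,ℓ} := Σ_{n=0}^∞ 1/(s_{n+1} − 1) is irrational. In particular, the Kellogg–Curtiss constant K = Σ_{n=0}^∞ 1/(S_n − 1) = K_{1,1}, where S_n is Sylvester's sequence (S_0 = 2, S_{n+1} = (S_n − 1)S_n + 1), is irrational. -/
/-!
If positive integers `b n` satisfy `b n ∣ b (n + 1)` and `b n (b n + 1) ≤ b (n + 1)`, then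
`∑ 1 / b n` is irrational: multiplying by `b n` turns the first `n + 1` terms into an integer,
while the tail, dominated by a geometric series, contributes a positive amount below
`2 / (b n + 1)`. If the sum were `p / q`, taking `b n > 2q` traps the integer
`q · b n · (tail)` strictly between `0` and `1`. Both constants are of this form: with
`b n = (s_0 ⋯ s_n)^ℓ` one has `b (n + 1) = b n (b n + 1)^ℓ`, and Sylvester's `b n = S_n - 1`
satisfies `b (n + 1) = b n (b n + 1)`.
-/

open Finset

theorem irrational_of_forall_exists_int_mul_sub_pos_lt (x : ℝ)
    (h : ∀ q : ℕ, 0 < q → ∃ m N : ℤ, 0 < m * x - N ∧ m * x - N < 1 / q) : Irrational x := by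
  rintro ⟨r, rfl⟩
  obtain ⟨m, N, hpos, hlt⟩ := h r.den r.pos
  have hden : (0 : ℝ) < r.den := mod_cast r.pos
  have hnum : (r.num : ℝ) = r * r.den := mod_cast (Rat.mul_den_eq_num r).symm
  have hz : ((m * r.num - r.den * N : ℤ) : ℝ) = r.den * (m * r - N) := by
    push_cast
    rw [hnum]
    ring
  have hz0 : (0 : ℝ) < (m * r.num - r.den * N : ℤ) := by
    rw [hz]
    positivity
  have hz1 : ((m * r.num - r.den * N : ℤ) : ℝ) < 1 := by
    rw [hz, ← lt_div_iff₀' hden]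
    simpa using hlt
  have : (0 : ℤ) < m * r.num - r.den * N := mod_cast hz0
  have : m * r.num - r.den * N < 1 := mod_cast hz1
  omega

section HalvingSequence

variable {f : ℕ → ℝ}

theorem le_half_pow_mul_of_le_half (hf : ∀ n, f (n + 1) ≤ f n / 2) (n j : ℕ) :
    f (n + j) ≤ (1 / 2) ^ j * f n := by
  induction j with
  | zero => simp
  | succ j ih =>
    calc f (n + (j + 1)) ≤ f (n + j) / 2 := hf (n + j)
      _ ≤ (1 / 2) ^ j * f n / 2 := by gcongr
      _ = (1 / 2) ^ (j + 1) * f n := by ring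

theorem summable_of_le_half (hf : ∀ n, f (n + 1) ≤ f n / 2) (hf0 : ∀ n, 0 ≤ f n) : Summable f :=
  ((summable_geometric_two.mul_right (f 0)).of_nonneg_of_le hf0) fun j => by
    simpa using le_half_pow_mul_of_le_half hf 0 j

theorem tsum_nat_add_le_two_mul_of_le_half (hf : ∀ n, f (n + 1) ≤ f n / 2) (hf0 : ∀ n, 0 ≤ f n)
    (n : ℕ) :
    ∑' j, f (j + n) ≤ 2 * f n := by
  have hgeo := summable_geometric_two.mul_right (f n)
  calc ∑' j, f (j + n) ≤ ∑' j : ℕ, (1 / 2 : ℝ) ^ j * f n :=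
        Summable.tsum_le_tsum (fun j => add_comm j n ▸ le_half_pow_mul_of_le_half hf n j)
          ((summable_nat_add_iff n).mpr (summable_of_le_half hf hf0)) hgeo
    _ = 2 * f n := by rw [tsum_mul_right, tsum_geometric_two]

end HalvingSequence

section EngelSeries

variable {b : ℕ → ℕ}

theorem self_lt_of_mul_succ_le (hb0 : 0 < b 0) (hgrow : ∀ n, b n * (b n + 1) ≤ b (n + 1))
    (n : ℕ) : n < b n := by
  induction n with
  | zero => exact hb0
  | succ n ih => nlinarith [hgrow n]

theorem dvd_of_le_of_dvd_succ (hdvd : ∀ n, b n ∣ b (n + 1)) {i n : ℕ} (hin : i ≤ n) :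
    b i ∣ b n := by
  induction n, hin using Nat.le_induction with
  | base => exact dvd_rfl
  | succ n _ ih => exact ih.trans (hdvd n)

theorem irrational_tsum_one_div_of_dvd_of_mul_succ_le (hb0 : 0 < b 0)
    (hdvd : ∀ n, b n ∣ b (n + 1)) (hgrow : ∀ n, b n * (b n + 1) ≤ b (n + 1)) :
    Irrational (∑' n, 1 / (b n : ℝ)) := by
  have hpos n : (0 : ℝ) < b n :=
    mod_cast (Nat.zero_le n).trans_lt (self_lt_of_mul_succ_le hb0 hgrow n)
  have hnonneg n : (0 : ℝ) ≤ 1 / b n := (one_div_pos.mpr (hpos n)).le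
  have hhalf n : 1 / (b (n + 1) : ℝ) ≤ 1 / b n / 2 := by
    have : (2 * b n : ℝ) ≤ b (n + 1) := by
      have := self_lt_of_mul_succ_le hb0 hgrow n
      exact_mod_cast (by nlinarith [hgrow n] : 2 * b n ≤ b (n + 1))
    rw [div_div, one_div_le_one_div (hpos _) (by linarith [hpos n])]
    linarith
  refine irrational_of_forall_exists_int_mul_sub_pos_lt _ fun q hq => ?_
  set n := 2 * q
  refine ⟨b n, ∑ i ∈ range (n + 1), (b n / b i : ℕ), ?_⟩
  have hpartial : ((b n : ℤ) : ℝ) * ∑ i ∈ range (n + 1), 1 / (b i : ℝ)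
      = ((∑ i ∈ range (n + 1), (b n / b i : ℕ) : ℤ) : ℝ) := by
    simp only [Int.cast_sum, Int.cast_natCast, mul_sum]
    refine sum_congr rfl fun i hi => ?_
    have hi : i ≤ n := Nat.lt_succ_iff.mp (mem_range.mp hi)
    rw [Nat.cast_div (dvd_of_le_of_dvd_succ hdvd hi) (hpos i).ne']
    ring
  have htail := tsum_nat_add_le_two_mul_of_le_half hhalf hnonneg (n + 1)
  rw [← (summable_of_le_half hhalf hnonneg).sum_add_tsum_nat_add (n + 1), mul_add, hpartial,
    add_sub_cancel_left, Int.cast_natCast]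
  have hbn := hpos n
  have hT : 0 < ∑' j, 1 / (b (j + (n + 1)) : ℝ) :=
    ((summable_nat_add_iff (n + 1)).mpr (summable_of_le_half hhalf hnonneg)).tsum_pos
      (fun _ => hnonneg _) 0 (one_div_pos.mpr (hpos _))
  refine ⟨by positivity, ?_⟩
  have hn : (2 * q : ℝ) < b n := mod_cast self_lt_of_mul_succ_le hb0 hgrow n
  have hnext : (b n * (b n + 1) : ℝ) ≤ b (n + 1) := mod_cast hgrow n
  calc (b n : ℝ) * ∑' j, 1 / (b (j + (n + 1)) : ℝ) ≤ b n * (2 * (1 / b (n + 1))) := by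
        gcongr
    _ ≤ b n * (2 * (1 / (b n * (b n + 1)))) := by
        gcongr
    _ = 2 / (b n + 1) := by field_simp
    _ < 1 / q := by
        rw [div_lt_div_iff₀ (by positivity) (by positivity)]
        linarith

end EngelSeries

theorem irrational_tsum_one_div_sub_one_of_eq_prod_pow_add_one {l : ℕ} (hl : 0 < l)
    {s : ℕ → ℕ} (hs0 : 0 < s 0) (hs : ∀ n, s (n + 1) = (∏ i ∈ range (n + 1), s i) ^ l + 1) :
    Irrational (∑' n, 1 / ((s (n + 1) : ℝ) - 1)) := by
  set b : ℕ → ℕ := fun n => (∏ i ∈ range (n + 1), s i) ^ l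
  have hb n : b (n + 1) = b n * (b n + 1) ^ l := by
    simp only [b]
    rw [prod_range_succ, ← hs, mul_pow]
  have hsub n : (s (n + 1) : ℝ) - 1 = b n := by
    rw [hs, Nat.cast_add_one, add_sub_cancel_right]
  simp_rw [hsub]
  refine irrational_tsum_one_div_of_dvd_of_mul_succ_le (pow_pos (by simpa using hs0) l)
    (fun n => hb n ▸ dvd_mul_right _ _)
    (fun n => hb n ▸ Nat.mul_le_mul_left _ (Nat.le_self_pow hl.ne' _))

theorem irrational_tsum_one_div_sub_one_of_sylvester {S : ℕ → ℕ} (hS0 : S 0 = 2)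
    (hS : ∀ n, S (n + 1) = (S n - 1) * S n + 1) :
    Irrational (∑' n, 1 / ((S n : ℝ) - 1)) := by
  have hS1 n : 1 ≤ S n := by cases n <;> simp [hS0, hS]
  have hsub n : (S n : ℝ) - 1 = (S n - 1 : ℕ) := by rw [Nat.cast_sub (hS1 n), Nat.cast_one]
  have hsucc n : S (n + 1) - 1 = (S n - 1) * (S n - 1 + 1) := by
    rw [hS n, Nat.add_sub_cancel, Nat.sub_add_cancel (hS1 n)]
  simp_rw [hsub]
  exact irrational_tsum_one_div_of_dvd_of_mul_succ_le (by simp [hS0])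
    (fun n => hsucc n ▸ dvd_mul_right _ _) (fun n => (hsucc n).ge)

/-- The Kellogg–Curtiss-type constant `K_{k,ℓ} = ∑ 1/(s_{n+1}(k,ℓ) - 1)` is irrational;
in particular so is the Kellogg–Curtiss constant `K = ∑ 1/(S_n - 1)`, where `S` is
Sylvester's sequence `S_0 = 2`, `S_{n+1} = (S_n - 1) S_n + 1`. -/
theorem stmt_18 (k l : ℕ) (hk : 0 < k) (hl : 0 < l)
    (s : ℕ → ℕ) (hs0 : s 0 = k)
    (hs : ∀ n : ℕ, s (n + 1) = (∏ i ∈ Finset.range (n + 1), s i) ^ l + 1) :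
    Irrational (∑' n : ℕ, 1 / ((s (n + 1) : ℝ) - 1)) ∧
    ∀ S : ℕ → ℕ, S 0 = 2 → (∀ n : ℕ, S (n + 1) = (S n - 1) * S n + 1) →
      Irrational (∑' n : ℕ, 1 / ((S n : ℝ) - 1)) :=
  ⟨irrational_tsum_one_div_sub_one_of_eq_prod_pow_add_one hl (hs0 ▸ hk) hs,
    fun _ => irrational_tsum_one_div_sub_one_of_sylvester⟩
end
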